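/- arXiv:2007.03323 — 5 statements merged into one kernel-verified Lean document; each statement's English description precedes it below -/
import Mathlib

section
/- Let G = (V,E) be a finite undirected graph, M a matching in G that is not maximum. Then there exists an M-augmenting path in G (Berge's theorem), and consequently if M' is obtained from M by switching along an augmenting path P, then M' is a matching with |M'| = |M| + 1 whose set of covered vertices equals the covered vertices of M together with the two endpoints of P. -/
variable {V : Type*} [Fintype V] [DecidableEq V]

/-- A matching of `G` all of whose edges lie inside the vertex set `W`
(i.e. a matching of the induced subgraph `G[W]`). -/
def IsMatchingOn (G : SimpleGraph V) (W : Set V) (M : Finset (Sym2 V)) : Prop :=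
  (∀ e ∈ M, e ∈ G.edgeSet) ∧ (∀ e ∈ M, ∀ v ∈ e, v ∈ W) ∧
  (M : Set (Sym2 V)).Pairwise fun e f => ∀ v, v ∈ e → v ∉ f

/-- Vertices covered by a set of edges. -/
def mcovered (M : Finset (Sym2 V)) : Set V := {v | ∃ e ∈ M, v ∈ e}

/-- `w(G[W])`: maximum cardinality of a matching of `G[W]`. -/
noncomputable def mmax (G : SimpleGraph V) (W : Set V) : ℕ :=
  sSup {n | ∃ M, IsMatchingOn G W M ∧ M.card = n}

/-- `w^L(G[W])`: minimum number of `L`-vertices covered over maximum matchings of `G[W]`. -/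
noncomputable def mwL (G : SimpleGraph V) (L W : Set V) : ℕ :=
  sInf {k | ∃ M, IsMatchingOn G W M ∧ M.card = mmax G W ∧ (mcovered M ∩ L).ncard = k}

/-- The edges of a path given by a vertex list. -/
def pathEdges (p : List V) : Finset (Sym2 V) :=
  ((p.zip p.tail).map fun q => s(q.1, q.2)).toFinset

/-- An `M`-augmenting path inside `W`: endpoints `M`-unmatched, edges alternating
outside/inside `M`, starting and ending with a non-matching edge. -/
def IsAugPathOn (G : SimpleGraph V) (W : Set V) (M : Finset (Sym2 V)) (p : List V) : Prop :=
  2 ≤ p.length ∧ p.Nodup ∧ p.Chain' G.Adj ∧ (∀ v ∈ p, v ∈ W) ∧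
  (∀ h : p ≠ [], p.head h ∉ mcovered M ∧ p.getLast h ∉ mcovered M) ∧
  ∀ i (h : i + 1 < p.length),
    (s(p.get ⟨i, Nat.lt_of_succ_lt h⟩, p.get ⟨i + 1, h⟩) ∈ M ↔ i % 2 = 1)

/-!
Berge's argument. Given a matching `N` larger than `M`, some vertex `v₀` is covered by `N` but
not by `M`. Take a longest path from `v₀` whose edges lie alternately in `N` and in `M`. If its
last edge is in `N`, maximality forces its far end to be `M`-exposed, so the path is
`M`-augmenting. If its last edge is in `M`, the far end is `N`-exposed; switching `N` along the
path then gives a matching of the same size as `N` whose symmetric difference with `M` is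
smaller, and we conclude by induction on `|M ∆ N|`.

Switching `M` along an augmenting path with `2k` vertices trades its `k - 1` edges in `M` for
its `k` edges outside `M`; interior vertices stay covered and the two endpoints become covered.
-/

open Finset
open scoped symmDiff

theorem Finset.card_symmDiff_add_card_inter {α : Type*} [DecidableEq α] (s t : Finset α) :
    #(s ∆ t) + #(t ∩ s) = #s + #(t \ s) := by
  rw [Finset.symmDiff_def, card_union_of_disjoint disjoint_sdiff_sdiff, inter_comm,
    ← card_sdiff_add_card_inter s t]
  omega

theorem Finset.card_symmDiff_symmDiff_lt {α : Type*} [DecidableEq α] {s t u : Finset α}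
    (hu : u ⊆ s ∆ t) (hne : u.Nonempty) : #(s ∆ (t ∆ u)) < #(s ∆ t) := by
  rw [← symmDiff_assoc, symmDiff_of_ge hu]
  exact card_lt_card (sdiff_ssubset hu hne)

theorem card_filter_range_mod_two_eq (n : ℕ) {s : ℕ} (hs : s < 2) :
    #{i ∈ range n | i % 2 = s} = (n + 1 - s) / 2 := by
  induction n with
  | zero => simp only [range_zero, filter_empty, card_empty]; omega
  | succ n ih =>
    rw [range_add_one, filter_insert]
    split_ifs with h
    · rw [card_insert_of_notMem (by simp), ih]; omega
    · rw [ih]; omega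

theorem exists_adjacent_index_mod_two_eq {n j s : ℕ} (hs : s < 2) (hj : j < n)
    (h₀ : j = 0 → s = 0 ∧ 1 < n) (h₁ : j + 1 = n → 0 < j ∧ j % 2 ≠ s) :
    ∃ i, i + 1 < n ∧ (j = i ∨ j = i + 1) ∧ i % 2 = s := by
  by_cases h : j + 1 < n ∧ j % 2 = s
  · exact ⟨j, h.1, .inl rfl, h.2⟩
  · refine ⟨j - 1, ?_, .inr ?_, ?_⟩ <;> omega

section
omit [Fintype V] [DecidableEq V]

variable {G : SimpleGraph V} {W : Set V} {M N : Finset (Sym2 V)} {p : List V} {i j s : ℕ}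
  {e f : Sym2 V} {v w : V}

theorem IsMatchingOn.eq_of_mem_of_mem (hM : IsMatchingOn G W M) (he : e ∈ M) (hf : f ∈ M)
    (hve : v ∈ e) (hvf : v ∈ f) : e = f :=
  by_contra fun hne => hM.2.2 he hf hne v hve hvf

theorem IsMatchingOn.not_isDiag (hM : IsMatchingOn G W M) (he : e ∈ M) : ¬e.IsDiag :=
  G.not_isDiag_of_mem_edgeSet (hM.1 e he)

theorem exists_isMatchingOn_card_eq_mmax [Fintype V] (G : SimpleGraph V) (W : Set V) :
    ∃ M, IsMatchingOn G W M ∧ #M = mmax G W :=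
  Nat.sSup_mem (s := {n | ∃ M, IsMatchingOn G W M ∧ #M = n})
    ⟨0, ∅, ⟨by simp, by simp, by simp⟩, rfl⟩
    ⟨Fintype.card (Sym2 V), by rintro _ ⟨M, -, rfl⟩; exact card_le_univ M⟩

theorem getElem_mem_pathEdge (h : i + 1 < p.length) (hj : j = i ∨ j = i + 1) :
    p[j]'(by omega) ∈ s(p[i], p[i + 1]) := by
  rcases hj with rfl | rfl
  exacts [Sym2.mem_mk_left _ _, Sym2.mem_mk_right _ _]

theorem getElem_mem_pathEdge_iff (hnd : p.Nodup) (h : i + 1 < p.length) (hj : j < p.length) :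
    p[j] ∈ s(p[i], p[i + 1]) ↔ j = i ∨ j = i + 1 := by
  rw [Sym2.mem_iff, hnd.getElem_inj_iff, hnd.getElem_inj_iff]

theorem pathEdge_injective (hnd : p.Nodup) (hi : i + 1 < p.length) (hj : j + 1 < p.length)
    (h : s(p[i], p[i + 1]) = s(p[j], p[j + 1])) : i = j := by
  rw [Sym2.eq_iff, hnd.getElem_inj_iff, hnd.getElem_inj_iff, hnd.getElem_inj_iff,
    hnd.getElem_inj_iff] at h
  omega

def IsAlternating (M : Finset (Sym2 V)) (s : ℕ) (p : List V) : Prop :=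
  ∀ i (h : i + 1 < p.length), s(p[i], p[i + 1]) ∈ M ↔ i % 2 = s

theorem IsAlternating.append (hp : IsAlternating M s p) (hne : 0 < p.length)
    (hw : s(p[p.length - 1], w) ∈ M ↔ (p.length - 1) % 2 = s) :
    IsAlternating M s (p ++ [w]) := by
  intro i hi
  rw [List.length_append, List.length_singleton] at hi
  rcases Nat.lt_or_ge (i + 1) p.length with h | h
  · rw [List.getElem_append_left (by omega), List.getElem_append_left h]
    exact hp i h
  · obtain rfl : i = p.length - 1 := by omega
    rw [List.getElem_append_left (by omega), List.getElem_append_right (by omega)]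
    simpa [show p.length - 1 + 1 - p.length = 0 by omega] using hw

structure IsAltPathFrom (M N : Finset (Sym2 V)) (v₀ : V) (p : List V) : Prop where
  getElem?_zero : p[0]? = some v₀
  nodup : p.Nodup
  isAlternating_left : IsAlternating M 1 p
  isAlternating_right : IsAlternating N 0 p

namespace IsAltPathFrom

variable {v₀ : V}

theorem length_pos (hp : IsAltPathFrom M N v₀ p) : 0 < p.length :=
  (List.getElem?_eq_some_iff.1 hp.getElem?_zero).1

theorem getElem_zero (hp : IsAltPathFrom M N v₀ p) : p[0]'hp.length_pos = v₀ :=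
  (List.getElem?_eq_some_iff.1 hp.getElem?_zero).2

theorem singleton : IsAltPathFrom M N v₀ [v₀] :=
  ⟨rfl, List.nodup_singleton _, fun i h => by simp at h, fun i h => by simp at h⟩

theorem exists_longest [Fintype V] (M N : Finset (Sym2 V)) (v₀ : V) :
    ∃ p, IsAltPathFrom M N v₀ p ∧
      ∀ q, IsAltPathFrom M N v₀ q → q.length ≤ p.length := by
  set S := {n | ∃ p, IsAltPathFrom M N v₀ p ∧ p.length = n}
  have hbdd : BddAbove S :=
    ⟨Fintype.card V, by rintro _ ⟨p, hp, rfl⟩; exact hp.nodup.length_le_card⟩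
  obtain ⟨p, hp, hlen⟩ := Nat.sSup_mem (s := S) ⟨1, [v₀], singleton, rfl⟩ hbdd
  exact ⟨p, hp, fun q hq => hlen ▸ le_csSup hbdd ⟨q, hq, rfl⟩⟩

end IsAltPathFrom

namespace IsAugPathOn

theorem isAlternating (hp : IsAugPathOn G W M p) : IsAlternating M 1 p :=
  fun i h => by simpa using hp.2.2.2.2.2 i h

theorem getElem_notMem_mcovered (hp : IsAugPathOn G W M p) (h : 0 < p.length) :
    p[0] ∉ mcovered M ∧ p[p.length - 1] ∉ mcovered M := by
  simpa [List.head_eq_getElem, List.getLast_eq_getElem] using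
    hp.2.2.2.2.1 (List.ne_nil_of_length_pos h)

theorem length_even (hp : IsAugPathOn G W M p) : p.length % 2 = 0 := by
  by_contra hodd
  have hi : p.length - 2 + 1 < p.length := by have := hp.1; omega
  exact (hp.getElem_notMem_mcovered (by omega)).2
    ⟨_, (hp.isAlternating _ hi).2 (by omega), getElem_mem_pathEdge hi (.inr (by omega))⟩

end IsAugPathOn

variable [DecidableEq V]

theorem mcovered_eq_coe_biUnion : mcovered M = ↑(M.biUnion Sym2.toFinset) := by
  ext v
  simp [mcovered, Sym2.mem_toFinset]

theorem IsMatchingOn.card_biUnion_toFinset (hM : IsMatchingOn G W M) :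
    #(M.biUnion Sym2.toFinset) = 2 * #M := by
  rw [card_biUnion fun e he f hf hne => disjoint_left.2 fun v hve hvf =>
      hM.2.2 he hf hne v (Sym2.mem_toFinset.1 hve) (Sym2.mem_toFinset.1 hvf),
    sum_congr rfl fun e he => Sym2.card_toFinset_of_not_isDiag e (hM.not_isDiag he),
    sum_const, smul_eq_mul, mul_comm]

theorem IsMatchingOn.exists_mem_mcovered_notMem (hM : IsMatchingOn G W M)
    (hN : IsMatchingOn G W N) (hlt : #M < #N) : ∃ v ∈ mcovered N, v ∉ mcovered M := by
  by_contra! h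
  have hsub : N.biUnion Sym2.toFinset ⊆ M.biUnion Sym2.toFinset := by
    rw [← coe_subset, ← mcovered_eq_coe_biUnion, ← mcovered_eq_coe_biUnion]
    exact h
  have := card_le_card hsub
  rw [hM.card_biUnion_toFinset, hN.card_biUnion_toFinset] at this
  omega

theorem mem_pathEdges :
    e ∈ pathEdges p ↔ ∃ i, ∃ h : i + 1 < p.length, e = s(p[i], p[i + 1]) := by
  simp [pathEdges, List.mem_iff_getElem, eq_comm, Nat.lt_sub_iff_add_lt]

theorem pathEdge_mem_pathEdges (h : i + 1 < p.length) : s(p[i], p[i + 1]) ∈ pathEdges p :=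
  mem_pathEdges.2 ⟨i, h, rfl⟩

theorem isChain_adj_iff_pathEdges_subset :
    p.IsChain G.Adj ↔ ∀ e ∈ pathEdges p, e ∈ G.edgeSet := by
  simp only [List.isChain_iff_getElem, mem_pathEdges]
  constructor
  · rintro h e ⟨i, hi, rfl⟩
    exact h i hi
  · exact fun h i hi => h _ ⟨i, hi, rfl⟩

theorem card_filter_pathEdges (hnd : p.Nodup) (q : Sym2 V → Prop) [DecidablePred q]
    (r : ℕ → Prop) [DecidablePred r]
    (hqr : ∀ i (h : i + 1 < p.length), q s(p[i], p[i + 1]) ↔ r i) :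
    #{e ∈ pathEdges p | q e} = #{i ∈ range (p.length - 1) | r i} := by
  have hlt : ∀ {i}, i ∈ {i ∈ range (p.length - 1) | r i} → i + 1 < p.length := fun hi => by
    simp only [mem_filter, mem_range] at hi
    omega
  symm
  refine card_bij (fun i hi => s(p[i]'(by have := hlt hi; omega), p[i + 1]'(hlt hi)))
    (fun i hi => ?_) (fun i hi j hj h => pathEdge_injective hnd (hlt hi) (hlt hj) h) ?_
  · exact mem_filter.2 ⟨pathEdge_mem_pathEdges _, (hqr i _).2 (mem_filter.1 hi).2⟩
  · intro e he
    obtain ⟨heP, hq⟩ := mem_filter.1 he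
    obtain ⟨i, hi, rfl⟩ := mem_pathEdges.1 heP
    exact ⟨i, mem_filter.2 ⟨mem_range.2 (by omega), (hqr i hi).1 hq⟩, rfl⟩

namespace IsAlternating

theorem mem_pathEdges_of_mem (hp : IsAlternating M s p) (hM : IsMatchingOn G W M) (he : e ∈ M)
    (hj : j < p.length) (hv : p[j] ∈ e) (hi : i + 1 < p.length) (hij : j = i ∨ j = i + 1)
    (hpar : i % 2 = s) : e ∈ pathEdges p := by
  rw [hM.eq_of_mem_of_mem he ((hp i hi).2 hpar) hv (getElem_mem_pathEdge hi hij)]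
  exact pathEdge_mem_pathEdges hi

theorem mem_pathEdges_of_getElem_mem (hp : IsAlternating M s p) (hM : IsMatchingOn G W M)
    (hs : s < 2) (hlen : 2 ≤ p.length) (hhead : s ≠ 0 → p[0] ∉ mcovered M)
    (hlast : (p.length - 2) % 2 ≠ s → p[p.length - 1] ∉ mcovered M)
    (he : e ∈ M) (hj : j < p.length) (hv : p[j] ∈ e) : e ∈ pathEdges p := by
  obtain ⟨i, hi, hij, hpar⟩ := exists_adjacent_index_mod_two_eq hs hj
    (fun h => by subst h; exact ⟨by_contra fun hs₀ => hhead hs₀ ⟨e, he, hv⟩, hlen⟩)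
    (fun h => ⟨by omega, fun hpar => hlast (by omega) ⟨e, he, by simpa [← h] using hv⟩⟩)
  exact hp.mem_pathEdges_of_mem hM he hj hv hi hij hpar

theorem card_symmDiff (hp : IsAlternating M s p) (hnd : p.Nodup) (hs : s < 2) :
    #(M ∆ pathEdges p) + (p.length - s) / 2 = #M + (p.length - 1 + s) / 2 := by
  have hin : #(pathEdges p ∩ M) = (p.length - s) / 2 := by
    rw [← filter_mem_eq_inter, card_filter_pathEdges hnd _ _ hp,
      card_filter_range_mod_two_eq _ hs]
    omega
  have hout : #(pathEdges p \ M) = (p.length - 1 + s) / 2 := by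
    rw [← filter_notMem_eq_sdiff, card_filter_pathEdges hnd _ (· % 2 = 1 - s)
      (fun i h => by rw [hp i h]; omega), card_filter_range_mod_two_eq _ (by omega)]
    omega
  rw [← hin, ← hout, card_symmDiff_add_card_inter]

theorem isMatchingOn_symmDiff (hp : IsAlternating M s p) (hM : IsMatchingOn G W M) (hs : s < 2)
    (hlen : 2 ≤ p.length) (hnd : p.Nodup) (hG : ∀ e ∈ pathEdges p, e ∈ G.edgeSet)
    (hW : ∀ v ∈ p, v ∈ W) (hhead : s ≠ 0 → p[0] ∉ mcovered M)
    (hlast : (p.length - 2) % 2 ≠ s → p[p.length - 1] ∉ mcovered M) :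
    IsMatchingOn G W (M ∆ pathEdges p) := by
  have onPath : ∀ {e j} (he : e ∈ M) (hj : j < p.length), p[j] ∈ e → e ∈ pathEdges p :=
    hp.mem_pathEdges_of_getElem_mem hM hs hlen hhead hlast
  have mixed : ∀ e ∈ M, e ∉ pathEdges p → ∀ f ∈ pathEdges p, ∀ v ∈ e, v ∉ f := by
    rintro e he heP f hf v hve hvf
    obtain ⟨i, hi, rfl⟩ := mem_pathEdges.1 hf
    rcases Sym2.mem_iff.1 hvf with rfl | rfl
    exacts [heP (onPath he _ hve), heP (onPath he _ hve)]
  refine ⟨fun e he => ?_, fun e he v hv => ?_, fun e he f hf hne v hve hvf => ?_⟩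
  · rcases mem_symmDiff.1 he with ⟨he, -⟩ | ⟨he, -⟩
    exacts [hM.1 e he, hG e he]
  · rcases mem_symmDiff.1 he with ⟨he, -⟩ | ⟨he, -⟩
    · exact hM.2.1 e he v hv
    · obtain ⟨i, hi, rfl⟩ := mem_pathEdges.1 he
      rcases Sym2.mem_iff.1 hv with rfl | rfl <;> exact hW _ (List.getElem_mem _)
  rw [mem_coe, mem_symmDiff] at he hf
  rcases he with ⟨heM, heP⟩ | ⟨heP, heM⟩ <;> rcases hf with ⟨hfM, hfP⟩ | ⟨hfP, hfM⟩
  · exact hne (hM.eq_of_mem_of_mem heM hfM hve hvf)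
  · exact mixed e heM heP f hfP v hve hvf
  · exact mixed f hfM hfP e heP v hvf hve
  · obtain ⟨i, hi, rfl⟩ := mem_pathEdges.1 heP
    obtain ⟨k, hk, rfl⟩ := mem_pathEdges.1 hfP
    have hik : i ≠ k := by rintro rfl; exact hne rfl
    have hi' := (hp i hi).not.1 heM
    have hk' := (hp k hk).not.1 hfM
    rcases Sym2.mem_iff.1 hve with rfl | rfl <;>
      rw [getElem_mem_pathEdge_iff hnd hk] at hvf <;> omega

theorem mcovered_symmDiff (hp : IsAlternating M 1 p) (hlen : 2 ≤ p.length)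
    (heven : p.length % 2 = 0) :
    mcovered (M ∆ pathEdges p) = mcovered M ∪ {p[0], p[p.length - 1]} := by
  have hold : ∀ j (hj : j < p.length), p[j] ∈ mcovered M ∪ {p[0], p[p.length - 1]} := by
    intro j hj
    by_cases h₀ : j = 0
    · subst h₀; exact .inr (.inl rfl)
    by_cases h₁ : j + 1 = p.length
    · exact .inr (.inr (by simp [← h₁]))
    obtain ⟨i, hi, hij, hpar⟩ :=
      exists_adjacent_index_mod_two_eq (s := 1) (by norm_num) hj (by omega) (by omega)
    exact .inl ⟨_, (hp i hi).2 hpar, getElem_mem_pathEdge hi hij⟩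
  have hnew : ∀ j (hj : j < p.length), p[j] ∈ mcovered (M ∆ pathEdges p) := by
    intro j hj
    obtain ⟨i, hi, hij, hpar⟩ :=
      exists_adjacent_index_mod_two_eq (s := 0) (by norm_num) hj (by omega) (by omega)
    refine ⟨_, mem_symmDiff.2 (.inr ⟨pathEdge_mem_pathEdges hi, fun h => ?_⟩),
      getElem_mem_pathEdge hi hij⟩
    have := (hp i hi).1 h
    omega
  ext v
  constructor
  · rintro ⟨e, he, hve⟩
    rcases mem_symmDiff.1 he with ⟨heM, -⟩ | ⟨heP, -⟩
    · exact .inl ⟨e, heM, hve⟩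
    · obtain ⟨i, hi, rfl⟩ := mem_pathEdges.1 heP
      rcases Sym2.mem_iff.1 hve with rfl | rfl <;> exact hold _ _
  · rintro (⟨e, heM, hve⟩ | hv)
    · by_cases heP : e ∈ pathEdges p
      · obtain ⟨i, hi, rfl⟩ := mem_pathEdges.1 heP
        rcases Sym2.mem_iff.1 hve with rfl | rfl <;> exact hnew _ _
      · exact ⟨e, mem_symmDiff.2 (.inl ⟨heM, heP⟩), hve⟩
    · rcases hv with rfl | rfl <;> exact hnew _ _

-- `M` is the matching the next edge has to come from; `IsAltPathFrom` uses this with `s = 1`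
-- and, with the two matchings exchanged, with `s = 0`.
theorem exists_append (hpM : IsAlternating M s p) (hpN : IsAlternating N (1 - s) p)
    (hM : IsMatchingOn G W M) (hN : IsMatchingOn G W N) (hs : s < 2) (hnd : p.Nodup)
    (hne : 0 < p.length) (hnext : (p.length - 1) % 2 = s)
    (hM₀ : s = 1 → p[0] ∉ mcovered M) (hN₀ : s = 0 → p[0] ∉ mcovered N)
    (hz : p[p.length - 1] ∈ mcovered M) :
    ∃ w, w ∉ p ∧ IsAlternating M s (p ++ [w]) ∧ IsAlternating N (1 - s) (p ++ [w]) := by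
  obtain ⟨f, hfM, hzf⟩ := hz
  obtain ⟨w, rfl⟩ := Sym2.mem_iff_exists.1 hzf
  have hfP : s(p[p.length - 1], w) ∉ pathEdges p := by
    intro hfP
    obtain ⟨i, hi, hfi⟩ := mem_pathEdges.1 hfP
    have := (getElem_mem_pathEdge_iff hnd hi _).1 (hfi ▸ Sym2.mem_mk_left _ _)
    have := (hpM i hi).1 (hfi ▸ hfM)
    omega
  have hwp : w ∉ p := by
    intro hw
    obtain ⟨j, hj, rfl⟩ := List.mem_iff_getElem.1 hw
    have hjz : j + 1 ≠ p.length := by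
      intro h
      exact hM.not_isDiag hfM (Sym2.mk_isDiag_iff.2 (by simp [← h]))
    obtain ⟨i, hi, hij, hpar⟩ := exists_adjacent_index_mod_two_eq hs hj
      (fun h => by
        subst h
        refine ⟨by_contra fun hs₀ => hM₀ (by omega) ⟨_, hfM, Sym2.mem_mk_right _ _⟩, ?_⟩
        omega)
      (fun h => absurd h hjz)
    exact hfP (hpM.mem_pathEdges_of_mem hM hfM hj (Sym2.mem_mk_right _ _) hi hij hpar)
  have hfN : s(p[p.length - 1], w) ∉ N := by
    intro hfN
    rcases Nat.lt_or_ge 1 p.length with h | h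
    · exact hfP (hpN.mem_pathEdges_of_mem hN hfN (j := p.length - 1) _ (Sym2.mem_mk_left _ _)
        (i := p.length - 2) (by omega) (by omega) (by omega))
    · have hz : p[p.length - 1] = p[0] := by simp [show p.length - 1 = 0 by omega]
      exact hN₀ (by omega) ⟨_, hfN, hz ▸ Sym2.mem_mk_left _ _⟩
  exact ⟨w, hwp, hpM.append hne (iff_of_true hfM hnext),
    hpN.append hne (iff_of_false hfN (by omega))⟩

theorem isAugPathOn (hp : IsAlternating M 1 p) (hlen : 2 ≤ p.length) (hnd : p.Nodup)
    (hG : ∀ e ∈ pathEdges p, e ∈ G.edgeSet) (hW : ∀ v ∈ p, v ∈ W)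
    (h₀ : p[0] ∉ mcovered M) (h₁ : p[p.length - 1] ∉ mcovered M) : IsAugPathOn G W M p :=
  ⟨hlen, hnd, isChain_adj_iff_pathEdges_subset.2 hG, hW,
    fun h => by simpa [List.head_eq_getElem, List.getLast_eq_getElem] using ⟨h₀, h₁⟩,
    fun i h => by simpa using hp i h⟩

end IsAlternating

namespace IsAltPathFrom

variable {v₀ : V}

theorem pathEdges_subset_symmDiff (hp : IsAltPathFrom M N v₀ p) : pathEdges p ⊆ M ∆ N := by
  intro e he
  obtain ⟨i, hi, rfl⟩ := mem_pathEdges.1 he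
  have hM := hp.isAlternating_left i hi
  have hN := hp.isAlternating_right i hi
  rcases Nat.mod_two_eq_zero_or_one i with h | h
  · exact mem_symmDiff.2 (.inr ⟨hN.2 h, fun h' => by have := hM.1 h'; omega⟩)
  · exact mem_symmDiff.2 (.inl ⟨hM.2 h, fun h' => by have := hN.1 h'; omega⟩)

theorem getLast_notMem_mcovered (hM : IsMatchingOn G W M) (hN : IsMatchingOn G W N)
    (hv₀ : v₀ ∉ mcovered M) (hp : IsAltPathFrom M N v₀ p)
    (hmax : ∀ q, IsAltPathFrom M N v₀ q → q.length ≤ p.length) (hne : 0 < p.length) :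
    (p.length % 2 = 0 → p[p.length - 1] ∉ mcovered M) ∧
      (p.length % 2 = 1 → p[p.length - 1] ∉ mcovered N) := by
  have hM₀ : p[0] ∉ mcovered M := hp.getElem_zero ▸ hv₀
  have hlonger : ∀ w, w ∉ p → IsAlternating M 1 (p ++ [w]) →
      IsAlternating N 0 (p ++ [w]) → False := fun w hw hM' hN' => by
    have := hmax _ ⟨by rw [List.getElem?_append_left hne]; exact hp.getElem?_zero,
      List.nodup_append.2 ⟨hp.nodup, List.nodup_singleton w,
        fun a ha b hb hab => hw (List.mem_singleton.1 hb ▸ hab ▸ ha)⟩,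
      hM', hN'⟩
    simp at this
  refine ⟨fun heven hz => ?_, fun hodd hz => ?_⟩
  · obtain ⟨w, hw, hM', hN'⟩ := hp.isAlternating_left.exists_append (s := 1)
      hp.isAlternating_right hM hN (by norm_num) hp.nodup hne (by omega) (fun _ => hM₀)
      (by omega) hz
    exact hlonger w hw hM' hN'
  · obtain ⟨w, hw, hN', hM'⟩ := hp.isAlternating_right.exists_append (s := 0)
      hp.isAlternating_left hN hM (by norm_num) hp.nodup hne (by omega) (by omega)
      (fun _ => hM₀) hz
    exact hlonger w hw hM' hN'

end IsAltPathFrom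

namespace IsAugPathOn

theorem isMatchingOn_symmDiff (hp : IsAugPathOn G W M p) (hM : IsMatchingOn G W M) :
    IsMatchingOn G W (M ∆ pathEdges p) :=
  have h := hp.getElem_notMem_mcovered (by have := hp.1; omega)
  hp.isAlternating.isMatchingOn_symmDiff hM (by norm_num) hp.1 hp.2.1
    (isChain_adj_iff_pathEdges_subset.1 hp.2.2.1) hp.2.2.2.1 (fun _ => h.1) (fun _ => h.2)

theorem card_symmDiff (hp : IsAugPathOn G W M p) : #(M ∆ pathEdges p) = #M + 1 := by
  have := hp.isAlternating.card_symmDiff hp.2.1 (by norm_num)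
  have := hp.length_even
  have := hp.1
  omega

theorem mcovered_symmDiff (hp : IsAugPathOn G W M p) (h : p ≠ []) :
    mcovered (M ∆ pathEdges p) = mcovered M ∪ {p.head h, p.getLast h} := by
  rw [List.head_eq_getElem, List.getLast_eq_getElem]
  exact hp.isAlternating.mcovered_symmDiff hp.1 hp.length_even

end IsAugPathOn

theorem IsMatchingOn.exists_isAugPathOn [Fintype V] (hM : IsMatchingOn G Set.univ M)
    (hN : IsMatchingOn G Set.univ N) (hlt : #M < #N) : ∃ p, IsAugPathOn G Set.univ M p := by
  induction hd : #(M ∆ N) using Nat.strong_induction_on generalizing N with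
  | _ d ih =>
    obtain ⟨v₀, hv₀N, hv₀M⟩ := hM.exists_mem_mcovered_notMem hN hlt
    obtain ⟨p, hp, hmax⟩ := IsAltPathFrom.exists_longest M N v₀
    have hne := hp.length_pos
    have hends := hp.getLast_notMem_mcovered hM hN hv₀M hmax hne
    have hPMN := hp.pathEdges_subset_symmDiff
    have hG : ∀ e ∈ pathEdges p, e ∈ G.edgeSet := fun e he => by
      rcases mem_union.1 (symmDiff_subset_union (hPMN he)) with h | h
      exacts [hM.1 e h, hN.1 e h]
    rcases Nat.mod_two_eq_zero_or_one p.length with heven | hodd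
    · exact ⟨p, hp.isAlternating_left.isAugPathOn (by omega) hp.nodup hG (fun _ _ => trivial)
        (hp.getElem_zero ▸ hv₀M) (hends.1 heven)⟩
    have hlen : 3 ≤ p.length := by
      by_contra h
      have : p[p.length - 1] = v₀ := by simp [show p.length - 1 = 0 by omega, ← hp.getElem_zero]
      exact hends.2 hodd (this ▸ hv₀N)
    have hN' := hp.isAlternating_right.isMatchingOn_symmDiff hN (by norm_num) (by omega) hp.nodup
      hG (fun _ _ => trivial) (absurd rfl) (fun _ => hends.2 hodd)
    have hcard := hp.isAlternating_right.card_symmDiff hp.nodup (by norm_num)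
    refine ih _ ?_ hN' (by omega) rfl
    rw [← hd]
    exact card_symmDiff_symmDiff_lt hPMN ⟨_, pathEdge_mem_pathEdges (i := 0) (by omega)⟩

end

/-- Berge: if a matching `M` of a finite graph `G` is not maximum, there
is an `M`-augmenting path `p`, and switching along `p` yields a matching of cardinality
`|M| + 1` covering exactly the vertices covered by `M` plus the two endpoints of `p`. -/
theorem stmt1 (G : SimpleGraph V) (M : Finset (Sym2 V))
    (hM : IsMatchingOn G Set.univ M) (hnotmax : M.card < mmax G Set.univ) :
    ∃ p, IsAugPathOn G Set.univ M p ∧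
      IsMatchingOn G Set.univ (symmDiff M (pathEdges p)) ∧
      (symmDiff M (pathEdges p)).card = M.card + 1 ∧
      ∀ h : p ≠ [],
        mcovered (symmDiff M (pathEdges p)) =
          mcovered M ∪ {p.head h, p.getLast h} := by
  obtain ⟨N, hN, hNcard⟩ := exists_isMatchingOn_card_eq_mmax G Set.univ
  obtain ⟨p, hp⟩ := hM.exists_isAugPathOn hN (hNcard ▸ hnotmax)
  exact ⟨p, hp, hp.isMatchingOn_symmDiff hM, hp.card_symmDiff, hp.mcovered_symmDiff⟩
end

section
/- Let G = (V,E) be a finite undirected graph with V partitioned into L and F, let S ⊆ L, and let u ∈ S. Define w(H) as the maximum cardinality of a matching in an induced subgraph H, and w^L(H) as the minimum number of L-vertices covered over all maximum matchings of H. If w(G[(V\S) ∪ {u}]) = w(G[V\S]) + 1, then every maximum matching of G[(V\S) ∪ {u}] matches u, and w^L(G[V\S]) < w^L(G[(V\S) ∪ {u}]). -/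
variable {V : Type*} [Fintype V] [DecidableEq V]

lemma matchingSet_bdd (G : SimpleGraph V) (W : Set V) :
    BddAbove {n | ∃ M, IsMatchingOn G W M ∧ M.card = n} := by
  refine ⟨Fintype.card (Sym2 V), ?_⟩
  rintro n ⟨M, _, rfl⟩
  exact Finset.card_le_univ M

lemma card_le_mmax {G : SimpleGraph V} {W : Set V} {M : Finset (Sym2 V)}
    (hM : IsMatchingOn G W M) : M.card ≤ mmax G W :=
  le_csSup (matchingSet_bdd G W) ⟨M, hM, rfl⟩

lemma mmax_spec (G : SimpleGraph V) (W : Set V) :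
    ∃ M, IsMatchingOn G W M ∧ M.card = mmax G W := by
  have hne : {n | ∃ M, IsMatchingOn G W M ∧ M.card = n}.Nonempty := by
    refine ⟨0, ∅, ⟨?_, ?_, ?_⟩, rfl⟩ <;> simp [Set.Pairwise]
  have := Nat.sSup_mem hne (matchingSet_bdd G W)
  obtain ⟨M, hM, hc⟩ := this
  exact ⟨M, hM, hc⟩

lemma mwL_spec (G : SimpleGraph V) (L W : Set V) :
    ∃ M, IsMatchingOn G W M ∧ M.card = mmax G W ∧
      (mcovered M ∩ L).ncard = mwL G L W := by
  have hne : {k | ∃ M, IsMatchingOn G W M ∧ M.card = mmax G W ∧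
      (mcovered M ∩ L).ncard = k}.Nonempty := by
    obtain ⟨M, hM, hc⟩ := mmax_spec G W
    exact ⟨_, M, hM, hc, rfl⟩
  exact Nat.sInf_mem hne

lemma mwL_le {G : SimpleGraph V} {L W : Set V} {M : Finset (Sym2 V)}
    (hM : IsMatchingOn G W M) (hc : M.card = mmax G W) :
    mwL G L W ≤ (mcovered M ∩ L).ncard :=
  Nat.sInf_le ⟨M, hM, hc, rfl⟩

/-- if adding `u ∈ S` to the pool increases the maximum matching size by one,
then every maximum matching of `G[(V\S) ∪ {u}]` matches `u`, and the worst-case leader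
coverage strictly increases. -/
theorem stmt2 (G : SimpleGraph V) (L F S : Set V)
    (hpart : L ∪ F = Set.univ) (hdisj : Disjoint L F) (hS : S ⊆ L)
    (u : V) (hu : u ∈ S)
    (h : mmax G (Sᶜ ∪ {u}) = mmax G Sᶜ + 1) :
    (∀ M, IsMatchingOn G (Sᶜ ∪ {u}) M → M.card = mmax G (Sᶜ ∪ {u}) →
      u ∈ mcovered M) ∧
    mwL G L Sᶜ < mwL G L (Sᶜ ∪ {u}) := by
  have part1 : ∀ M, IsMatchingOn G (Sᶜ ∪ {u}) M → M.card = mmax G (Sᶜ ∪ {u}) →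
      u ∈ mcovered M := by
    intro M hM hc
    by_contra hnu
    have hM' : IsMatchingOn G Sᶜ M := by
      refine ⟨hM.1, ?_, hM.2.2⟩
      intro e he v hv
      rcases hM.2.1 e he v hv with h' | h'
      · exact h'
      · exact absurd ⟨e, he, h'.symm ▸ hv⟩ hnu
    have := card_le_mmax hM'
    omega
  refine ⟨part1, ?_⟩
  obtain ⟨M, hM, hc, hk⟩ := mwL_spec G L (Sᶜ ∪ {u})
  obtain ⟨e, heM, hue⟩ := part1 M hM hc
  set M' := M.erase e with hM'def
  have hnu' : ∀ f ∈ M', u ∉ f := by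
    intro f hf
    exact hM.2.2 (Finset.mem_coe.mpr heM) (Finset.mem_coe.mpr (Finset.mem_of_mem_erase hf))
      (fun hef => (Finset.ne_of_mem_erase hf) hef.symm) u hue
  have hM' : IsMatchingOn G Sᶜ M' := by
    refine ⟨fun f hf => hM.1 f (Finset.mem_of_mem_erase hf), ?_, ?_⟩
    · intro f hf v hv
      rcases hM.2.1 f (Finset.mem_of_mem_erase hf) v hv with h' | h'
      · exact h'
      · exact absurd (h' ▸ hv) (hnu' f hf)
    · exact hM.2.2.mono (by intro x hx; exact Finset.mem_of_mem_erase hx)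
  have hcard' : M'.card = mmax G Sᶜ := by
    rw [hM'def, Finset.card_erase_of_mem heM, hc, h]; omega
  have hmaxcard : ∀ N, IsMatchingOn G Sᶜ N → N.card = mmax G Sᶜ → True := fun _ _ _ => trivial
  have hle : mwL G L Sᶜ ≤ (mcovered M' ∩ L).ncard := mwL_le hM' hcard'
  have hss : mcovered M' ∩ L ⊂ mcovered M ∩ L := by
    constructor
    · rintro v ⟨⟨f, hf, hvf⟩, hvL⟩
      exact ⟨⟨f, Finset.mem_of_mem_erase hf, hvf⟩, hvL⟩
    · intro hsub
      have huin : u ∈ mcovered M ∩ L := ⟨⟨e, heM, hue⟩, hS hu⟩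
      obtain ⟨⟨f, hf, huf⟩, _⟩ := hsub huin
      exact hnu' f hf huf
  have hlt : (mcovered M' ∩ L).ncard < (mcovered M ∩ L).ncard :=
    Set.ncard_lt_ncard hss (Set.toFinite _)
  omega
end

section
/- If S ⊆ L contains exactly one of the two nodes t_{x,1}, t_{x,2} of some x-gadget, then in no pair of cycle packings (one on G[S], one on G[V\S]) can that withheld node be covered: the node in S has no cycle through it within G[S] intersected with the gadget structure (its only arcs into S-nodes are to its twin, which is absent), so the leader cannot guarantee covering all its nodes with such a strategy. -/
variable {V : Type*} [DecidableEq V]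

/-- A directed (simple) cycle given as a list of distinct vertices. -/
def IsDicycle (A : V → V → Prop) (c : List V) : Prop :=
  2 ≤ c.length ∧ c.Nodup ∧ c.Chain' A ∧
    ∀ h : c ≠ [], A (c.getLast h) (c.head h)

def cycVerts (c : List V) : Set V := {v | v ∈ c}

/-- A `K`-cycle packing inside the vertex set `W`. -/
def IsCyclePackingOn (A : V → V → Prop) (K : ℕ) (W : Set V) (P : Finset (List V)) : Prop :=
  (∀ c ∈ P, IsDicycle A c ∧ c.length ≤ K ∧ ∀ v ∈ c, v ∈ W) ∧
  (P : Set (List V)).Pairwise fun c d => ∀ v, v ∈ c → v ∉ d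

def packSize (P : Finset (List V)) : ℕ := ∑ c ∈ P, c.length

def pcovered (P : Finset (List V)) : Set V := {v | ∃ c ∈ P, v ∈ c}

/-- Maximum size of a `K`-cycle packing on `G[W]`. -/
noncomputable def wDir (A : V → V → Prop) (K : ℕ) (W : Set V) : ℕ :=
  sSup {n | ∃ P, IsCyclePackingOn A K W P ∧ packSize P = n}

/-- Minimum number of `L`-nodes covered over all maximum `K`-cycle packings on `G[W]`. -/
noncomputable def wLDir (A : V → V → Prop) (K : ℕ) (L W : Set V) : ℕ :=
  sInf {k | ∃ P, IsCyclePackingOn A K W P ∧ packSize P = wDir A K W ∧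
    (pcovered P ∩ L).ncard = k}

/-! A vertex covered by a cycle packing on `G[W]` has an out-neighbour in `W`, namely its
successor on its cycle. Inside `S` the only candidate out-neighbour of `t1` is `t2 ∉ S`; and a
packing on `G[Sᶜ]` avoids `t1 ∈ S` altogether. -/

theorem IsDicycle.exists_rel_mem {α : Type*} {A : α → α → Prop} {c : List α}
    (hc : IsDicycle A c) {v : α} (hv : v ∈ c) : ∃ u ∈ c, A v u := by
  obtain ⟨-, -, hchain, hclose⟩ := hc
  obtain ⟨s, t, rfl⟩ := List.append_of_mem hv
  cases t with
  | nil =>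
    refine ⟨_, List.head_mem (by simp), ?_⟩
    simpa using hclose (by simp)
  | cons u t =>
    exact ⟨u, by simp, (List.isChain_append_cons_cons.mp hchain).2.1⟩

section

variable {α : Type*} {A : α → α → Prop} {K : ℕ} {W : Set α} {P : Finset (List α)}

theorem IsCyclePackingOn.mem_of_mem_pcovered (hP : IsCyclePackingOn A K W P) {v : α}
    (hv : v ∈ pcovered P) : v ∈ W := by
  obtain ⟨c, hcP, hvc⟩ := hv
  exact (hP.1 c hcP).2.2 v hvc

theorem IsCyclePackingOn.exists_rel_mem_of_mem_pcovered (hP : IsCyclePackingOn A K W P) {v : α}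
    (hv : v ∈ pcovered P) : ∃ u ∈ W, A v u := by
  obtain ⟨c, hcP, hvc⟩ := hv
  obtain ⟨hcyc, -, hcW⟩ := hP.1 c hcP
  obtain ⟨u, huc, hvu⟩ := hcyc.exists_rel_mem hvc
  exact ⟨u, hcW u huc, hvu⟩

end

/-- let `S ⊆ L` be a leader strategy containing `t1` but not its twin `t2`,
where (as in the Stackelberg KEP construction) the only leader node reachable from `t1`
by an arc is `t2`. Then `t1` cannot be covered by any pair of cycle packings, one on
`G[S]` and one on `G[V\S]`. -/
theorem stmt9 (A : V → V → Prop) (L S : Set V) (hS : S ⊆ L)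
    (t1 t2 : V) (h1 : t1 ∈ S) (h2 : t2 ∉ S)
    (hout : ∀ u, A t1 u → u ∈ L → u = t2) (K : ℕ) :
    (∀ P, IsCyclePackingOn A K S P → t1 ∉ pcovered P) ∧
    (∀ Q, IsCyclePackingOn A K Sᶜ Q → t1 ∉ pcovered Q) := by
  refine ⟨fun P hP ht1 => ?_, fun Q hQ ht1 => hQ.mem_of_mem_pcovered ht1 h1⟩
  obtain ⟨u, huS, hu⟩ := hP.exists_rel_mem_of_mem_pcovered ht1
  exact h2 (hout u hu (hS huS) ▸ huS)
end

section
/- Given a 3-SAT instance in which some variable occurs both negated and unnegated, and given the (2,2)-SAT instance constructed by replacing the j-th occurrence of each variable u_i by a fresh variable z_i^j, adding consistency clauses (z_i^j ∨ ¬z_i^{j+1 mod k}) for each i, and a rest clause: any satisfying assignment of the consistency clauses forces z_i^1 = z_i^2 = ... = z_i^k for every i. -/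
/-- for each variable `i` with `occ i` occurrences, the cyclic consistency
clauses `(z_i^j ∨ ¬ z_i^{j+1 mod occ i})` force all copies `z_i^1, …, z_i^{occ i}` to
take a common truth value. -/
theorem stmt11 {ι : Type*} (occ : ι → ℕ) (z : (i : ι) → Fin (occ i) → Bool)
    (hsat : ∀ (i : ι) (j : Fin (occ i)),
      z i j = true ∨ z i ⟨((j : ℕ) + 1) % occ i, Nat.mod_lt _ j.pos⟩ = false) :
    ∀ (i : ι) (j j' : Fin (occ i)), z i j = z i j' := by
  intro i j j'
  have key : ∀ (a : Fin (occ i)), z i a = false → ∀ b : Fin (occ i), z i b = false := by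
    intro a ha b
    have h1 : ∀ m : ℕ, z i ⟨((a : ℕ) + m) % occ i, Nat.mod_lt _ a.pos⟩ = false := by
      intro m
      induction m with
      | zero =>
        have h0 : ((a : ℕ) + 0) % occ i = (a : ℕ) := by
          simp [Nat.mod_eq_of_lt a.isLt]
        rw [show (⟨((a : ℕ) + 0) % occ i, Nat.mod_lt _ a.pos⟩ : Fin (occ i)) = a from
          Fin.ext h0]
        exact ha
      | succ m ih =>
        rcases hsat i ⟨((a : ℕ) + m) % occ i, Nat.mod_lt _ a.pos⟩ with h | h
        · rw [ih] at h; exact absurd h (by simp)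
        · have heq : (((a : ℕ) + m) % occ i + 1) % occ i = ((a : ℕ) + (m + 1)) % occ i := by
            conv_rhs => rw [← Nat.add_assoc, ← Nat.mod_add_mod]
          rw [show (⟨(((a : ℕ) + m) % occ i + 1) % occ i, Nat.mod_lt _ a.pos⟩ :
              Fin (occ i)) = ⟨((a : ℕ) + (m + 1)) % occ i, Nat.mod_lt _ a.pos⟩ from
            Fin.ext heq] at h
          exact h
    have hb := h1 (occ i - (a : ℕ) + (b : ℕ))
    have hidx : ((a : ℕ) + (occ i - (a : ℕ) + (b : ℕ))) % occ i = (b : ℕ) := by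
      have ha' := a.isLt; have hb' := b.isLt
      have : (a : ℕ) + (occ i - (a : ℕ) + (b : ℕ)) = occ i + (b : ℕ) := by omega
      rw [this, Nat.add_mod_left, Nat.mod_eq_of_lt hb']
    rwa [show (⟨((a : ℕ) + (occ i - (a : ℕ) + (b : ℕ))) % occ i, Nat.mod_lt _ a.pos⟩ :
        Fin (occ i)) = b from Fin.ext hidx] at hb
  cases hj : z i j with
  | false => rw [key j hj j']
  | true =>
    cases hj' : z i j' with
    | true => rfl
    | false => rw [key j' hj' j] at hj; exact (Bool.false_ne_true hj).elim
end

section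
/- The reduction from 3-SAT to (2,2)-SAT is truth-preserving: the 3-SAT instance I is satisfiable if and only if the constructed (2,2)-SAT instance f(I) is satisfiable; moreover a satisfying assignment of I lifts to one of f(I) by setting all copies z_i^j equal to u_i, and a satisfying assignment of f(I) restricts to one of I via u_i := z_i^1. -/
/-- Clauses and CNF formulas: a literal is a variable with a polarity. -/
abbrev Clause (α : Type*) := List (α × Bool)
abbrev CNF (α : Type*) := List (Clause α)

def cnfSat {α : Type*} (F : CNF α) (a : α → Bool) : Prop :=
  ∀ c ∈ F, ∃ l ∈ c, a l.1 = l.2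

variable {n : ℕ}

/-- The polarities of the occurrences of variable `i` in `I`, in order. -/
def occList (I : CNF (Fin n)) (i : Fin n) : List Bool :=
  (I.flatten.filter fun l => l.1 = i).map Prod.snd

/-- The number of occurrences of variable `i` in `I`. -/
def occ (I : CNF (Fin n)) (i : Fin n) : ℕ := (occList I i).length

/-- Number of occurrences of `i` in a single clause. -/
def cnt (i : Fin n) (c : Clause (Fin n)) : ℕ := (c.filter fun l => l.1 = i).length

/-- Occurrence index of the literal at position `q` of clause `p` (for variable `i`):
the number of earlier occurrences of `i`. -/
def occIdx (I : CNF (Fin n)) (p q : ℕ) (i : Fin n) : ℕ :=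
  ((I.take p).map (cnt i)).sum + cnt i ((I.getD p []).take q)

/-- The clause at position `p`, with the `j`-th occurrence of each variable `u_i`
replaced by the fresh copy `z_i^j` (copies are modelled as pairs `(i, j)`). -/
def replClause (I : CNF (Fin n)) (p : ℕ) (c : Clause (Fin n)) : Clause (Fin n × ℕ) :=
  c.mapIdx fun q l => ((l.1, occIdx I p q l.1), l.2)

def replClauses (I : CNF (Fin n)) : CNF (Fin n × ℕ) :=
  I.mapIdx fun p c => replClause I p c

/-- The cyclic consistency clauses `(z_i^j ∨ ¬ z_i^{j+1 mod occ i})`. -/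
def consistencyClauses (I : CNF (Fin n)) : CNF (Fin n × ℕ) :=
  ((List.finRange n).map fun i =>
    (List.range (occ I i)).map fun j =>
      [((i, j), true), ((i, (j + 1) % occ I i), false)]).flatten

/-- The rest clause: one more occurrence of each copy `z_i^j`, with polarity opposite to
its occurrence in the replaced clauses, so that every copy occurs exactly twice negated
and twice unnegated. -/
def restClause (I : CNF (Fin n)) : Clause (Fin n × ℕ) :=
  ((List.finRange n).map fun i =>
    (List.range (occ I i)).map fun j => ((i, j), !((occList I i).getD j true))).flatten

/-- The constructed (2,2)-SAT instance `f(I)`. -/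
def reduct (I : CNF (Fin n)) : CNF (Fin n × ℕ) :=
  replClauses I ++ consistencyClauses I ++ [restClause I]

/-!
Lifting `a` to the copies `z_i^j := a u_i` satisfies each replaced clause through the literal
that satisfied the original clause, and each consistency clause because it contains a copy of
`u_i` with each polarity. The rest clause holds because some variable occurs with both
polarities in `I`, so the rest clause contains one of its copies with each polarity.

Conversely, the consistency clauses of `u_i` are the implications `z_i^{j+1} → z_i^j` around a
cycle through all copies of `u_i`, so a satisfying assignment of `f(I)` is constant on these
copies and every replaced clause reads as the original clause under `u_i := z_i^0`.
-/

theorem eq_zero_of_forall_succ_mod_le {α : Type*} [PartialOrder α] {k : ℕ} {f : ℕ → α}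
    (hf : ∀ j < k, f ((j + 1) % k) ≤ f j) {j : ℕ} (hj : j < k) : f j = f 0 := by
  have descend : ∀ i m, i ≤ m → m < k → f m ≤ f i := by
    intro i m him
    induction m, him using Nat.le_induction with
    | base => exact fun _ => le_rfl
    | succ m _ ih =>
      intro hm
      have step := hf m (by omega)
      rw [Nat.mod_eq_of_lt hm] at step
      exact step.trans (ih (by omega))
  have wrap : f 0 ≤ f (k - 1) := by
    simpa [Nat.sub_add_cancel (by omega : 1 ≤ k)] using hf (k - 1) (by omega)
  exact le_antisymm (descend 0 j j.zero_le hj)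
    (wrap.trans (descend j (k - 1) (by omega) (by omega)))

theorem cnfSat_append {α : Type*} {F G : CNF α} {a : α → Bool} :
    cnfSat (F ++ G) a ↔ cnfSat F a ∧ cnfSat G a :=
  List.forall_mem_append

variable {I : CNF (Fin n)}

theorem occ_eq_sum_cnt (I : CNF (Fin n)) (i : Fin n) : occ I i = (I.map (cnt i)).sum := by
  simp only [occ, occList, List.length_map, List.filter_flatten,
    List.length_flatten, List.map_map, Function.comp_def]
  rfl

theorem cnt_take_lt_cnt {cl : Clause (Fin n)} {q : ℕ} {i : Fin n} (hq : q < cl.length)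
    (hi : cl[q].1 = i) : cnt i (cl.take q) < cnt i cl := by
  have hsucc : cnt i (cl.take (q + 1)) = cnt i (cl.take q) + 1 := by
    unfold cnt
    rw [List.take_add_one, List.getElem?_eq_getElem hq, Option.toList_some, List.filter_append,
      List.length_append, List.filter_singleton, hi]
    simp
  have hle : cnt i (cl.take (q + 1)) ≤ cnt i cl :=
    ((List.take_sublist _ _).filter _).length_le
  omega

theorem sum_take_add_le_sum {l : List ℕ} {p : ℕ} (hp : p < l.length) :
    (l.take p).sum + l[p] ≤ l.sum := by
  conv_rhs => rw [← List.take_append_drop p l, ← List.getElem_cons_drop hp]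
  simp only [List.sum_append, List.sum_cons]
  omega

theorem occIdx_lt_occ {p q : ℕ} {i : Fin n} (hp : p < I.length) (hq : q < I[p].length)
    (hi : I[p][q].1 = i) : occIdx I p q i < occ I i := by
  have hclause := cnt_take_lt_cnt hq hi
  have hsum := sum_take_add_le_sum (l := I.map (cnt i)) (p := p) (by simpa using hp)
  rw [← List.map_take, List.getElem_map] at hsum
  rw [occ_eq_sum_cnt, occIdx, List.getD_eq_getElem I [] hp]
  omega

theorem mem_occList_iff {i : Fin n} {b : Bool} :
    b ∈ occList I i ↔ ∃ c ∈ I, (i, b) ∈ c := by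
  simp [occList, List.mem_flatten]

theorem map_replClause (I : CNF (Fin n)) (p : ℕ) (c : Clause (Fin n)) :
    (replClause I p c).map (fun l => (l.1.1, l.2)) = c := by
  apply List.ext_getElem <;> simp [replClause]

theorem replClause_mem_replClauses {p : ℕ} (hp : p < I.length) :
    replClause I p I[p] ∈ replClauses I :=
  List.mem_mapIdx.2 ⟨p, hp, rfl⟩

theorem mem_consistencyClauses {c : Clause (Fin n × ℕ)} :
    c ∈ consistencyClauses I ↔
      ∃ i, ∃ j < occ I i, [((i, j), true), ((i, (j + 1) % occ I i), false)] = c := by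
  simp [consistencyClauses]

theorem mem_restClause {i : Fin n} {j : ℕ} (hj : j < occ I i) :
    ((i, j), !((occList I i).getD j true)) ∈ restClause I := by
  simp only [restClause, List.mem_flatten, List.mem_map]
  exact ⟨_, ⟨i, List.mem_finRange i, rfl⟩, List.mem_map.2 ⟨j, List.mem_range.2 hj, rfl⟩⟩

section Lift

variable {a : Fin n → Bool}

theorem cnfSat_replClauses (ha : cnfSat I a) : cnfSat (replClauses I) fun x => a x.1 := by
  intro c hc
  obtain ⟨p, hp, rfl⟩ := List.mem_mapIdx.1 hc
  obtain ⟨l, hl, hal⟩ := ha _ (List.getElem_mem hp)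
  rw [← map_replClause I p I[p], List.mem_map] at hl
  obtain ⟨l', hl', rfl⟩ := hl
  exact ⟨l', hl', hal⟩

theorem cnfSat_consistencyClauses (I : CNF (Fin n)) (a : Fin n → Bool) :
    cnfSat (consistencyClauses I) fun x => a x.1 := by
  intro c hc
  obtain ⟨i, j, -, rfl⟩ := mem_consistencyClauses.1 hc
  cases h : a i
  · exact ⟨_, List.mem_cons_of_mem _ (List.mem_singleton_self _), h⟩
  · exact ⟨_, List.mem_cons_self, h⟩

theorem exists_mem_restClause_sat
    (hnontriv : ∃ i : Fin n, (∃ c ∈ I, (i, true) ∈ c) ∧ ∃ c' ∈ I, (i, false) ∈ c') :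
    ∃ l ∈ restClause I, a l.1.1 = l.2 := by
  obtain ⟨i, hpos, hneg⟩ := hnontriv
  have hocc : (!a i) ∈ occList I i := by
    cases a i
    · exact mem_occList_iff.2 hpos
    · exact mem_occList_iff.2 hneg
  obtain ⟨j, hj, hget⟩ := List.mem_iff_getElem.1 hocc
  refine ⟨_, mem_restClause hj, ?_⟩
  rw [List.getD_eq_getElem _ _ hj, hget, Bool.not_not]

theorem cnfSat_reduct_of_cnfSat
    (hnontriv : ∃ i : Fin n, (∃ c ∈ I, (i, true) ∈ c) ∧ ∃ c' ∈ I, (i, false) ∈ c')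
    (ha : cnfSat I a) : cnfSat (reduct I) fun x => a x.1 := by
  rw [reduct, cnfSat_append, cnfSat_append]
  refine ⟨⟨cnfSat_replClauses ha, cnfSat_consistencyClauses I a⟩, ?_⟩
  simpa [cnfSat] using exists_mem_restClause_sat hnontriv

end Lift

section Restrict

variable {z : Fin n × ℕ → Bool}

theorem copy_eq_of_cnfSat_consistencyClauses (hz : cnfSat (consistencyClauses I) z)
    {i : Fin n} {j : ℕ} (hj : j < occ I i) : z (i, j) = z (i, 0) := by
  refine eq_zero_of_forall_succ_mod_le (f := fun j => z (i, j)) (fun j hj => ?_) hj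
  obtain ⟨l, hl, hzl⟩ := hz _ (mem_consistencyClauses.2 ⟨i, j, hj, rfl⟩)
  simp only [List.mem_cons, List.not_mem_nil, or_false] at hl
  rcases hl with rfl | rfl <;> simp_all

theorem cnfSat_of_cnfSat_reduct (hz : cnfSat (reduct I) z) : cnfSat I fun i => z (i, 0) := by
  rw [reduct, cnfSat_append, cnfSat_append] at hz
  obtain ⟨⟨hrepl, hcons⟩, -⟩ := hz
  intro c hc
  obtain ⟨p, hp, rfl⟩ := List.mem_iff_getElem.1 hc
  obtain ⟨l, hl, hzl⟩ := hrepl _ (replClause_mem_replClauses hp)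
  obtain ⟨q, hq, rfl⟩ := List.mem_mapIdx.1 hl
  have hcopy := copy_eq_of_cnfSat_consistencyClauses hcons (occIdx_lt_occ hp hq rfl)
  exact ⟨I[p][q], List.getElem_mem hq, hcopy.symm.trans hzl⟩

end Restrict

theorem stmt12_general (I : CNF (Fin n))
    (hnontriv : ∃ i : Fin n, (∃ c ∈ I, (i, true) ∈ c) ∧ ∃ c' ∈ I, (i, false) ∈ c') :
    ((∃ a : Fin n → Bool, cnfSat I a) ↔ ∃ z : Fin n × ℕ → Bool, cnfSat (reduct I) z) ∧
    (∀ a : Fin n → Bool, cnfSat I a → cnfSat (reduct I) fun p => a p.1) ∧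
    (∀ z : Fin n × ℕ → Bool, cnfSat (reduct I) z → cnfSat I fun i => z (i, 0)) :=
  ⟨⟨fun ⟨a, ha⟩ => ⟨fun x => a x.1, cnfSat_reduct_of_cnfSat hnontriv ha⟩,
      fun ⟨z, hz⟩ => ⟨fun i => z (i, 0), cnfSat_of_cnfSat_reduct hz⟩⟩,
    fun _ => cnfSat_reduct_of_cnfSat hnontriv, fun _ => cnfSat_of_cnfSat_reduct⟩

/-- the reduction from 3-SAT to (2,2)-SAT is truth-preserving: `I` is
satisfiable iff `f(I)` is; a satisfying assignment of `I` lifts by copying values to all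
copies, and a satisfying assignment of `f(I)` restricts via `u_i := z_i^0`. -/
theorem stmt12 (I : CNF (Fin n))
    (h3 : ∀ c ∈ I, c.length ≤ 3)
    (hnontriv : ∃ i : Fin n, (∃ c ∈ I, (i, true) ∈ c) ∧ ∃ c' ∈ I, (i, false) ∈ c') :
    ((∃ a : Fin n → Bool, cnfSat I a) ↔ ∃ z : Fin n × ℕ → Bool, cnfSat (reduct I) z) ∧
    (∀ a : Fin n → Bool, cnfSat I a → cnfSat (reduct I) fun p => a p.1) ∧
    (∀ z : Fin n × ℕ → Bool, cnfSat (reduct I) z → cnfSat I fun i => z (i, 0)) :=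
  stmt12_general I hnontriv
end
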